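/- If λ = β = 1/2, then the non-unital associative subalgebra of the 4×4 real matrices generated by {l_o, l_a, l_b} equals M₀, the subspace of matrices whose only possibly nonzero entries are at positions (1,1), (2,1), (2,2), (3,1), (3,3), (4,1), (4,2), (4,3). -/

import Mathlib

/-!
`M₀` is the set of matrices `M` with `M i j = 0` unless `j ≺ i`, where `j ≺ i` means `j = 0`,
or `i = j ∈ {1, 2}`, or `i = 3 ≠ j` (0-indexed). This relation is transitive, so `M₀` is a
non-unital subalgebra; it contains the three generators, hence the generated subalgebra.
Conversely every matrix unit of `M₀` is an explicit noncommutative polynomial in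
`l_o, l_a, l_b`, so `M₀` is spanned by the generated subalgebra.
-/

/-- The matrix of left multiplication by `o` in `B'(l, β)` in the ordered basis
`(o, a, b, ab)`: `l_o = E₁₁ + l·E₂₂ + l·E₃₃`. -/
noncomputable def lMo (l β : ℝ) : Matrix (Fin 4) (Fin 4) ℝ :=
  !![1, 0, 0, 0;
     0, l, 0, 0;
     0, 0, l, 0;
     0, 0, 0, 0]

/-- The matrix of left multiplication by `a` in `B'(l, β)`:
`l_a = l·E₂₁ + E₂₂ + ((l-β)/l)·E₂₃ + ((l+β-1)/l)·E₃₃ + E₄₃`. -/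
noncomputable def lMa (l β : ℝ) : Matrix (Fin 4) (Fin 4) ℝ :=
  !![0, 0, 0, 0;
     l, 1, (l - β) / l, 0;
     0, 0, (l + β - 1) / l, 0;
     0, 0, 1, 0]

/-- The matrix of left multiplication by `b` in `B'(l, β)`:
`l_b = ((l-β)/l)·E₂₂ + l·E₃₁ + ((l+β-1)/l)·E₃₂ + E₃₃ + E₄₂`. -/
noncomputable def lMb (l β : ℝ) : Matrix (Fin 4) (Fin 4) ℝ :=
  !![0, 0, 0, 0;
     0, (l - β) / l, 0, 0;
     l, (l + β - 1) / l, 1, 0;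
     0, 1, 0, 0]

/-- `M₀`: the 4×4 real matrices whose only possibly nonzero entries are at the
(1-indexed) positions (1,1), (2,1), (2,2), (3,1), (3,3), (4,1), (4,2), (4,3). -/
def Mset0 : Set (Matrix (Fin 4) (Fin 4) ℝ) :=
  {m | m 0 1 = 0 ∧ m 0 2 = 0 ∧ m 0 3 = 0 ∧ m 1 2 = 0 ∧ m 1 3 = 0 ∧
       m 2 1 = 0 ∧ m 2 3 = 0 ∧ m 3 3 = 0}

namespace Matrix

variable {n R : Type*} [Fintype n] [CommSemiring R]

def supportedOn (r : n → n → Prop) : Set (Matrix n n R) :=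
  {M | ∀ i j, ¬ r i j → M i j = 0}

theorem mul_mem_supportedOn {r : n → n → Prop} (hr : ∀ i j k, r i j → r j k → r i k)
    {M N : Matrix n n R} (hM : M ∈ supportedOn r) (hN : N ∈ supportedOn r) :
    M * N ∈ supportedOn r := by
  intro i k hik
  rw [mul_apply]
  refine Finset.sum_eq_zero fun j _ => ?_
  by_cases hij : r i j
  · rw [hN j k fun hjk => hik (hr i j k hij hjk), mul_zero]
  · rw [hM i j hij, zero_mul]

def supportedOnNonUnitalSubalgebra (r : n → n → Prop) (hr : ∀ i j k, r i j → r j k → r i k) :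
    NonUnitalSubalgebra R (Matrix n n R) where
  carrier := supportedOn r
  add_mem' hM hN i j h := by simp [hM i j h, hN i j h]
  zero_mem' _ _ _ := rfl
  mul_mem' := mul_mem_supportedOn hr
  smul_mem' c _ hM i j h := by simp [hM i j h]

theorem supportedOn_subset [DecidableEq n] {r : n → n → Prop}
    {S : NonUnitalSubalgebra R (Matrix n n R)} (hS : ∀ i j, r i j → single i j 1 ∈ S) :
    supportedOn r ⊆ (S : Set (Matrix n n R)) := by
  intro M hM
  rw [matrix_eq_sum_single M]
  refine sum_mem fun i _ => sum_mem fun j _ => ?_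
  by_cases hij : r i j
  · simpa [smul_single] using SMulMemClass.smul_mem (M i j) (hS i j hij)
  · simp [hM i j hij]

end Matrix

open Matrix NonUnitalAlgebra

def supportM₀ : Finset (Fin 4 × Fin 4) :=
  {(0, 0), (1, 0), (1, 1), (2, 0), (2, 2), (3, 0), (3, 1), (3, 2)}

theorem supportM₀_trans (i j k : Fin 4) :
    (i, j) ∈ supportM₀ → (j, k) ∈ supportM₀ → (i, k) ∈ supportM₀ := by
  revert i j k
  decide

theorem Mset0_eq_supportedOn : Mset0 = supportedOn fun i j => (i, j) ∈ supportM₀ := by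
  ext M
  constructor
  · rintro ⟨h01, h02, h03, h12, h13, h21, h23, h33⟩ i j hij
    fin_cases i <;> fin_cases j <;> simp_all [supportM₀]
  · intro h
    exact ⟨h 0 1 (by decide), h 0 2 (by decide), h 0 3 (by decide), h 1 2 (by decide),
      h 1 3 (by decide), h 2 1 (by decide), h 2 3 (by decide), h 3 3 (by decide)⟩

local notation "lo" => lMo (1 / 2) (1 / 2)
local notation "la" => lMa (1 / 2) (1 / 2)
local notation "lb" => lMb (1 / 2) (1 / 2)

theorem generators_mem_supportedOn :
    ∀ M ∈ ({lo, la, lb} : Set (Matrix (Fin 4) (Fin 4) ℝ)),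
      M ∈ supportedOn fun i j => (i, j) ∈ supportM₀ := by
  rintro _ (rfl | rfl | rfl) i j <;> fin_cases i <;> fin_cases j <;>
    norm_num [supportM₀, lMo, lMa, lMb, Fin.ext_iff]

/- At `λ = β = 1/2` (0-indexed units): `l_o = E₀₀ + ½E₁₁ + ½E₂₂`, `l_a = ½E₁₀ + E₁₁ + E₃₂`,
`l_b = ½E₂₀ + E₂₂ + E₃₁`; so `l_a² = ½E₁₀ + E₁₁` and `l_a² l_o - l_o l_a² = ¼E₁₀`. -/
set_option maxHeartbeats 400000 in
theorem singles_eq_polys_in_generators :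
    single 0 0 1 = (2 : ℝ) • (lo * lo) - lo ∧
    single 1 0 1 = (4 : ℝ) • (la * la * lo - lo * (la * la)) ∧
    single 1 1 1 = la * la - (2 : ℝ) • (la * la * lo - lo * (la * la)) ∧
    single 2 0 1 = (4 : ℝ) • (lb * lb * lo - lo * (lb * lb)) ∧
    single 2 2 1 = lb * lb - (2 : ℝ) • (lb * lb * lo - lo * (lb * lb)) ∧
    single 3 1 1 = lb - lb * lb ∧
    single 3 2 1 = la - la * la := by
  refine ⟨?_, ?_, ?_, ?_, ?_, ?_, ?_⟩ <;> ext i j <;> fin_cases i <;> fin_cases j <;>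
    norm_num [lMo, lMa, lMb, mul_apply, Fin.sum_univ_four, single_apply, Fin.ext_iff]

theorem single_mem_adjoin (i j : Fin 4) (hij : (i, j) ∈ supportM₀) :
    single i j 1 ∈ adjoin ℝ ({lo, la, lb} : Set (Matrix (Fin 4) (Fin 4) ℝ)) := by
  obtain ⟨h00, h10, h11, h20, h22, h31, h32⟩ := singles_eq_polys_in_generators
  have ho : lo ∈ adjoin ℝ ({lo, la, lb} : Set (Matrix (Fin 4) (Fin 4) ℝ)) :=
    subset_adjoin ℝ (by simp)
  have ha : la ∈ adjoin ℝ ({lo, la, lb} : Set (Matrix (Fin 4) (Fin 4) ℝ)) :=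
    subset_adjoin ℝ (by simp)
  have hb : lb ∈ adjoin ℝ ({lo, la, lb} : Set (Matrix (Fin 4) (Fin 4) ℝ)) :=
    subset_adjoin ℝ (by simp)
  have hcomm_a := sub_mem (mul_mem (mul_mem ha ha) ho) (mul_mem ho (mul_mem ha ha))
  have hcomm_b := sub_mem (mul_mem (mul_mem hb hb) ho) (mul_mem ho (mul_mem hb hb))
  have h30 : (single 3 0 1 : Matrix (Fin 4) (Fin 4) ℝ) = single 3 2 1 * single 2 0 1 := by
    rw [single_mul_single_same, one_mul]
  simp only [supportM₀, Finset.mem_insert, Finset.mem_singleton, Prod.mk.injEq] at hij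
  rcases hij with ⟨rfl, rfl⟩ | ⟨rfl, rfl⟩ | ⟨rfl, rfl⟩ | ⟨rfl, rfl⟩ | ⟨rfl, rfl⟩ | ⟨rfl, rfl⟩ |
    ⟨rfl, rfl⟩ | ⟨rfl, rfl⟩
  · rw [h00]; exact sub_mem (SMulMemClass.smul_mem _ (mul_mem ho ho)) ho
  · rw [h10]; exact SMulMemClass.smul_mem _ hcomm_a
  · rw [h11]; exact sub_mem (mul_mem ha ha) (SMulMemClass.smul_mem _ hcomm_a)
  · rw [h20]; exact SMulMemClass.smul_mem _ hcomm_b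
  · rw [h22]; exact sub_mem (mul_mem hb hb) (SMulMemClass.smul_mem _ hcomm_b)
  · rw [h30, h32, h20]
    exact mul_mem (sub_mem ha (mul_mem ha ha)) (SMulMemClass.smul_mem _ hcomm_b)
  · rw [h31]; exact sub_mem hb (mul_mem hb hb)
  · rw [h32]; exact sub_mem ha (mul_mem ha ha)

/-- If `l = β = 1/2`, the non-unital associative subalgebra of the 4×4 real matrices
generated by `{l_o, l_a, l_b}` equals `M₀`. -/
theorem stmt_15 :
    (NonUnitalAlgebra.adjoin ℝ
        ({lMo (1/2) (1/2), lMa (1/2) (1/2), lMb (1/2) (1/2)} :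
          Set (Matrix (Fin 4) (Fin 4) ℝ)) : Set (Matrix (Fin 4) (Fin 4) ℝ)) = Mset0 := by
  rw [Mset0_eq_supportedOn]
  refine subset_antisymm ?_ (supportedOn_subset fun i j => single_mem_adjoin i j)
  exact adjoin_le (S := supportedOnNonUnitalSubalgebra _ supportM₀_trans)
    generators_mem_supportedOn
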